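/- Consider signed distributions μ : ({−1,1})⁴ → ℝ on outcomes (a, b, a′, b′) with Σ μ = 1 whose four pairwise marginals onto the contexts (a,a′), (a,b′), (b,a′), (b,b′) equal the Popescu–Rohrlich box tables: for (a,a′), (a,b′) and (b,a′): equal outcomes have probability 1/2 each and unequal outcomes probability 0; for (b,b′): unequal outcomes have probability 1/2 each and equal outcomes probability 0. Then the minimum of Σ_{ω ∈ ({−1,1})⁴} |μ(ω)| over all such μ equals 2 (equivalently, the contextuality of the PR box equals 1, its maximal possible value). -/

import Mathlib

/-!
The lower bound is the CHSH argument run for signed measures. The observable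
`chsh = a a' + a b' + b a' - b b' = a (a' + b') + b (a' - b')` takes values in `[-2, 2]`
at every outcome, so its `μ`-expectation is at most `2 ∑ |μ|`; but the expectation only
depends on the four context marginals, and for the PR box it is `1 + 1 + 1 - (-1) = 4`.
The bound is attained by a signed combination of four deterministic outcomes with
weights `±1/2`.
-/

/-- The two-point outcome set `{-1, 1}`. -/
abbrev PM : Type := ({-1, 1} : Finset ℤ)

namespace PM

def minus : PM := ⟨-1, by decide⟩

def plus : PM := ⟨1, by decide⟩

theorem univ_eq : (Finset.univ : Finset PM) = {minus, plus} := by decide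

theorem sum_eq {M : Type*} [AddCommMonoid M] (f : PM → M) :
    ∑ x : PM, f x = f minus + f plus := by
  rw [univ_eq, Finset.sum_pair (by decide)]

theorem forall_iff {P : PM → Prop} : (∀ x, P x) ↔ P minus ∧ P plus := by
  refine ⟨fun h => ⟨h _, h _⟩, fun ⟨hm, hp⟩ x => ?_⟩
  have hx : x ∈ ({minus, plus} : Finset PM) := univ_eq ▸ Finset.mem_univ x
  rcases Finset.mem_insert.1 hx with rfl | hx
  · exact hm
  · rwa [Finset.mem_singleton.1 hx]

theorem abs_le_one (x : PM) : |(x.1 : ℝ)| ≤ 1 := by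
  revert x
  simp

theorem sum_sum_ite_eq_mul :
    ∑ x : PM, ∑ y : PM, (if x = y then (1 / 2 : ℝ) else 0) * (x.1 * y.1) = 1 := by
  simp only [sum_eq]
  norm_num [minus, plus]

theorem sum_sum_ite_ne_mul :
    ∑ x : PM, ∑ y : PM, (if x = y then 0 else (1 / 2 : ℝ)) * (x.1 * y.1) = -1 := by
  simp only [sum_eq]
  norm_num [minus, plus]

end PM

section Marginals

variable {R α β γ δ : Type*} [NonUnitalNonAssocSemiring R]
  [Fintype α] [Fintype β] [Fintype γ] [Fintype δ] (μ : α → β → γ → δ → R)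

theorem sum₄_mul_eq_marginal₁₃ (g : α → γ → R) :
    ∑ a, ∑ b, ∑ c, ∑ d, μ a b c d * g a c = ∑ a, ∑ c, (∑ b, ∑ d, μ a b c d) * g a c := by
  simp_rw [Finset.sum_mul]
  exact Finset.sum_congr rfl fun _ _ => Finset.sum_comm

theorem sum₄_mul_eq_marginal₁₄ (g : α → δ → R) :
    ∑ a, ∑ b, ∑ c, ∑ d, μ a b c d * g a d = ∑ a, ∑ d, (∑ b, ∑ c, μ a b c d) * g a d := by
  simp_rw [Finset.sum_mul]
  refine Finset.sum_congr rfl fun a _ => ?_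
  rw [Finset.sum_comm (s := Finset.univ (α := δ))]
  exact Finset.sum_congr rfl fun b _ => Finset.sum_comm

theorem sum₄_mul_eq_marginal₂₃ (g : β → γ → R) :
    ∑ a, ∑ b, ∑ c, ∑ d, μ a b c d * g b c = ∑ b, ∑ c, (∑ a, ∑ d, μ a b c d) * g b c := by
  simp_rw [Finset.sum_mul]
  rw [Finset.sum_comm]
  exact Finset.sum_congr rfl fun _ _ => Finset.sum_comm

theorem sum₄_mul_eq_marginal₂₄ (g : β → δ → R) :
    ∑ a, ∑ b, ∑ c, ∑ d, μ a b c d * g b d = ∑ b, ∑ d, (∑ a, ∑ c, μ a b c d) * g b d := by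
  simp_rw [Finset.sum_mul]
  rw [Finset.sum_comm]
  refine Finset.sum_congr rfl fun b _ => ?_
  rw [Finset.sum_comm (s := Finset.univ (α := δ))]
  exact Finset.sum_congr rfl fun a _ => Finset.sum_comm

end Marginals

theorem abs_chsh_le_two {x y z w : ℝ} (hx : |x| ≤ 1) (hy : |y| ≤ 1) (hz : |z| ≤ 1)
    (hw : |w| ≤ 1) : |x * z + x * w + y * z - y * w| ≤ 2 :=
  calc |x * z + x * w + y * z - y * w| = |x * (z + w) + y * (z - w)| := by ring_nf
    _ ≤ |z + w| + |z - w| := by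
      grw [abs_add_le, abs_mul, abs_mul]
      gcongr
      · exact mul_le_of_le_one_left (abs_nonneg _) hx
      · exact mul_le_of_le_one_left (abs_nonneg _) hy
    _ ≤ 2 := by
      rw [abs_le] at hz hw
      cases abs_cases (z + w) <;> cases abs_cases (z - w) <;> linarith

noncomputable def chsh (a b a' b' : PM) : ℝ :=
  a.1 * a'.1 + a.1 * b'.1 + b.1 * a'.1 - b.1 * b'.1

theorem sum_mul_chsh_le (μ : PM → PM → PM → PM → ℝ) :
    ∑ a, ∑ b, ∑ a', ∑ b', μ a b a' b' * chsh a b a' b'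
      ≤ 2 * ∑ a, ∑ b, ∑ a', ∑ b', |μ a b a' b'| := by
  simp only [Finset.mul_sum]
  refine Finset.sum_le_sum fun a _ => Finset.sum_le_sum fun b _ =>
    Finset.sum_le_sum fun a' _ => Finset.sum_le_sum fun b' _ => ?_
  calc μ a b a' b' * chsh a b a' b' ≤ |μ a b a' b'| * |chsh a b a' b'| :=
        (le_abs_self _).trans (abs_mul _ _).le
    _ ≤ 2 * |μ a b a' b'| := by
      rw [mul_comm]
      gcongr
      exact abs_chsh_le_two (PM.abs_le_one a) (PM.abs_le_one b) (PM.abs_le_one a')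
        (PM.abs_le_one b')

theorem sum_mul_chsh_eq_four {μ : PM → PM → PM → PM → ℝ}
    (h₁₃ : ∀ a a' : PM, ∑ b : PM, ∑ b' : PM, μ a b a' b' = if a = a' then 1/2 else 0)
    (h₁₄ : ∀ a b' : PM, ∑ b : PM, ∑ a' : PM, μ a b a' b' = if a = b' then 1/2 else 0)
    (h₂₃ : ∀ b a' : PM, ∑ a : PM, ∑ b' : PM, μ a b a' b' = if b = a' then 1/2 else 0)
    (h₂₄ : ∀ b b' : PM, ∑ a : PM, ∑ a' : PM, μ a b a' b' = if b = b' then 0 else 1/2) :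
    ∑ a, ∑ b, ∑ a', ∑ b', μ a b a' b' * chsh a b a' b' = 4 := by
  simp only [chsh, mul_add, mul_sub, Finset.sum_add_distrib, Finset.sum_sub_distrib]
  rw [sum₄_mul_eq_marginal₁₃ μ fun a a' => (a.1 * a'.1 : ℝ),
    sum₄_mul_eq_marginal₁₄ μ fun a b' => (a.1 * b'.1 : ℝ),
    sum₄_mul_eq_marginal₂₃ μ fun b a' => (b.1 * a'.1 : ℝ),
    sum₄_mul_eq_marginal₂₄ μ fun b b' => (b.1 * b'.1 : ℝ)]
  simp only [h₁₃, h₁₄, h₂₃, h₂₄, PM.sum_sum_ite_eq_mul, PM.sum_sum_ite_ne_mul]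
  norm_num

noncomputable def prWitness (a b a' b' : PM) : ℝ :=
  if a.1 = -1 ∧ b.1 = -1 ∧ a'.1 = -1 ∧ b'.1 = 1 then 1/2
  else if a.1 = -1 ∧ b.1 = 1 ∧ a'.1 = -1 ∧ b'.1 = -1 then 1/2
  else if a.1 = -1 ∧ b.1 = 1 ∧ a'.1 = -1 ∧ b'.1 = 1 then -(1/2)
  else if a.1 = 1 ∧ b.1 = 1 ∧ a'.1 = 1 ∧ b'.1 = 1 then 1/2
  else 0

/-- For the Popescu–Rohrlich box (contexts `(a,a')`, `(a,b')`, `(b,a')` with equal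
outcomes of probability `1/2` each and unequal outcomes of probability `0`, and context
`(b,b')` with unequal outcomes of probability `1/2` each and equal outcomes `0`), the
minimum of `∑ |μ(ω)|` over all signed distributions `μ` on `({-1,1})⁴` with `∑ μ = 1`
reproducing these pairwise marginals equals `2`, i.e. the contextuality of the PR box
is `1`, the maximal possible value. -/
theorem stmt_10 :
    IsLeast {s : ℝ | ∃ μ : PM → PM → PM → PM → ℝ,
        (∑ a : PM, ∑ b : PM, ∑ a' : PM, ∑ b' : PM, μ a b a' b' = 1) ∧
        (∀ a a' : PM, ∑ b : PM, ∑ b' : PM, μ a b a' b'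
            = if a = a' then 1/2 else 0) ∧
        (∀ a b' : PM, ∑ b : PM, ∑ a' : PM, μ a b a' b'
            = if a = b' then 1/2 else 0) ∧
        (∀ b a' : PM, ∑ a : PM, ∑ b' : PM, μ a b a' b'
            = if b = a' then 1/2 else 0) ∧
        (∀ b b' : PM, ∑ a : PM, ∑ a' : PM, μ a b a' b'
            = if b = b' then 0 else 1/2) ∧
        s = ∑ a : PM, ∑ b : PM, ∑ a' : PM, ∑ b' : PM, |μ a b a' b'|}
      2 := by
  refine ⟨⟨prWitness, ?_⟩, ?_⟩
  · simp only [PM.forall_iff, PM.sum_eq]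
    norm_num [prWitness, PM.minus, PM.plus, abs_of_pos]
  · rintro s ⟨μ, -, h₁₃, h₁₄, h₂₃, h₂₄, rfl⟩
    linarith [sum_mul_chsh_le μ, sum_mul_chsh_eq_four h₁₃ h₁₄ h₂₃ h₂₄]
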